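/- arXiv:2303.05471 — 6 statements merged into one kernel-verified Lean document; each statement's English description precedes it below -/
import Mathlib

section
/- Let A have at least two elements a ≠ b. There exists an ω-operation ψ : A^ω → A lying in the uniform closure complement: ψ is not in the U-closure of (O_A)^⊤, where U is the uniform ideal; concretely, ψ(r) = a if no coordinate of r equals b, and ψ(r) = b otherwise, is not in the U-closure of {f^⊤ : f finitary}. Hence the U-closure of (O_A)^⊤ is a proper subset of O_A^{(ω)}. -/
/-!
Let `probe m` be the sequence that equals `b` exactly on the `(m - 1)`-th column
`{Nat.pair (m - 1) k | k}` of `ℕ` and `a` elsewhere (so `probe 0` is constant `a`). Any two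
probes differ on an infinite column, so each basic trace contains at most one of them and the
countable set of all probes lies in the uniform ideal. Since every index in column `n` is
at least `n`, the probes `probe 0` and `probe (n + 1)` agree on the first `n` coordinates,
while `ψ` takes the value `a` on the first and `b` on the second: no `f^⊤` of arity `n` can
agree with `ψ` on all probes.
-/

section AlmostEqual

variable {ι α : Type*}

theorem finite_setOf_finite_ne_of_pairwise_infinite_ne {d : Set (ι → α)}
    (hd : d.Pairwise fun r r' => {i | r i ≠ r' i}.Infinite) (s : ι → α) :
    {r ∈ d | {i | r i ≠ s i}.Finite}.Finite := by
  refine Set.Subsingleton.finite fun r ⟨hr, hrs⟩ r' ⟨hr', hr's⟩ => ?_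
  by_contra hne
  refine hd hr hr' hne ((hrs.union hr's).subset fun i hi => ?_)
  by_contra hi'
  simp only [Set.mem_union, Set.mem_ofPred_eq, not_or, not_not] at hi'
  exact hi (hi'.1.trans hi'.2.symm)

end AlmostEqual

section Probe

variable {A : Type*} (a b : A)

def probe (m : ℕ) (i : ℕ) : A :=
  if (Nat.unpair i).1 + 1 = m then b else a

theorem probe_zero : probe a b 0 = fun _ => a := by
  funext i
  simp [probe]

theorem probe_succ_of_lt {n i : ℕ} (hi : i < n) : probe a b (n + 1) i = a :=
  if_neg fun h => by have := Nat.unpair_left_le i; omega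

theorem probe_pair (n k : ℕ) : probe a b (n + 1) (Nat.pair n k) = b := by
  simp [probe]

theorem probe_pair_of_ne {m n : ℕ} (h : m ≠ n + 1) (k : ℕ) :
    probe a b m (Nat.pair n k) = a := by
  simp [probe, Ne.symm h]

variable {a b}

theorem infinite_setOf_probe_ne_of_lt (hab : a ≠ b) {m n : ℕ} (h : m < n + 1) :
    {i | probe a b m i ≠ probe a b (n + 1) i}.Infinite := by
  refine Set.infinite_of_injective_forall_mem (f := Nat.pair n)
    (fun k k' hk => (Nat.pair_eq_pair.mp hk).2) fun k => ?_
  simp only [Set.mem_ofPred_eq, probe_pair, probe_pair_of_ne a b h.ne]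
  exact hab

theorem pairwise_infinite_setOf_probe_ne (hab : a ≠ b) :
    (Set.range (probe a b)).Pairwise fun r r' => {i | r i ≠ r' i}.Infinite := by
  rintro _ ⟨m, rfl⟩ _ ⟨m', rfl⟩ hne
  rcases lt_or_gt_of_ne fun h : m = m' => hne (h ▸ rfl) with h | h
  · obtain ⟨n, rfl⟩ := Nat.exists_eq_add_one_of_ne_zero (Nat.ne_zero_of_lt h)
    exact infinite_setOf_probe_ne_of_lt hab h
  · obtain ⟨n, rfl⟩ := Nat.exists_eq_add_one_of_ne_zero (Nat.ne_zero_of_lt h)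
    simpa only [ne_comm] using infinite_setOf_probe_ne_of_lt hab h

end Probe

/-- For a ≠ b in A, the ω-operation ψ (ψ(r)=a if no coordinate of r is b, else b)
does not belong to the uniform closure of the top extensions of finitary operations. -/
theorem stmt_10 {A : Type*} (a b : A) (hab : a ≠ b) (ψ : (ℕ → A) → A)
    (hψ : ∀ r : ℕ → A,
      ((∀ i, r i ≠ b) → ψ r = a) ∧ ((∃ i, r i = b) → ψ r = b)) :
    ¬ (∀ d : Set (ℕ → A),
        (d.Countable ∧ ∀ s : ℕ → A, {r ∈ d | {i : ℕ | r i ≠ s i}.Finite}.Finite) →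
        ∃ (n : ℕ) (f : (Fin n → A) → A),
          ∀ r ∈ d, ψ r = f (fun i : Fin n => r i.val)) := by
  intro H
  obtain ⟨n, f, hf⟩ := H (Set.range (probe a b)) ⟨Set.countable_range _,
    finite_setOf_finite_ne_of_pairwise_infinite_ne (pairwise_infinite_setOf_probe_ne hab)⟩
  have hψ_zero : ψ (probe a b 0) = a := (hψ _).1 fun i => by simpa [probe_zero] using hab
  have hψ_succ : ψ (probe a b (n + 1)) = b := (hψ _).2 ⟨_, probe_pair a b n 0⟩
  have hprefix : (fun i : Fin n => probe a b (n + 1) i) = fun i : Fin n => probe a b 0 i := by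
    funext i
    rw [probe_succ_of_lt a b i.isLt, probe_zero]
  apply hab
  calc a = ψ (probe a b 0) := hψ_zero.symm
    _ = f (fun i : Fin n => probe a b 0 i) := hf _ ⟨0, rfl⟩
    _ = f (fun i : Fin n => probe a b (n + 1) i) := by rw [hprefix]
    _ = ψ (probe a b (n + 1)) := (hf _ ⟨n + 1, rfl⟩).symm
    _ = b := hψ_succ
end

section
/- Let X be a substitutive ideal on A^ω and C an ω-clone on A. Then the X-closure Cl_X(C) is an ω-clone on A. -/
/-- If X is a substitutive ideal on A^ω and C is an ω-clone, then Cl_X(C) is an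
ω-clone: it contains all projections and is closed under the operations q_n. -/
theorem stmt_11 {A : Type*} (X : Set (Set (ℕ → A)))
    (hdown : ∀ d ∈ X, ∀ c : Set (ℕ → A), c ⊆ d → c ∈ X)
    (hunion : ∀ d₁ ∈ X, ∀ d₂ ∈ X, d₁ ∪ d₂ ∈ X)
    (hsub : ∀ d ∈ X, ∀ (n : ℕ) (φ : Fin n → ((ℕ → A) → A)),
      {t : ℕ → A | ∃ s ∈ d,
        t = fun i : ℕ => if h : i < n then φ ⟨i, h⟩ s else s i} ∈ X)
    (C : Set ((ℕ → A) → A))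
    (hproj : ∀ n : ℕ, (fun s : ℕ → A => s n) ∈ C)
    (hq : ∀ (n : ℕ) (φ : (ℕ → A) → A), φ ∈ C → ∀ ψ : Fin n → ((ℕ → A) → A),
      (∀ i, ψ i ∈ C) →
      (fun s : ℕ → A => φ (fun i : ℕ => if h : i < n then ψ ⟨i, h⟩ s else s i)) ∈ C) :
    (∀ n : ℕ, (fun s : ℕ → A => s n) ∈
        {φ : (ℕ → A) → A | ∀ d ∈ X, ∃ ψ ∈ C, Set.EqOn φ ψ d}) ∧
    (∀ (n : ℕ) (φ : (ℕ → A) → A),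
      φ ∈ {φ : (ℕ → A) → A | ∀ d ∈ X, ∃ ψ ∈ C, Set.EqOn φ ψ d} →
      ∀ ψ : Fin n → ((ℕ → A) → A),
        (∀ i, ψ i ∈ {φ : (ℕ → A) → A | ∀ d ∈ X, ∃ ψ' ∈ C, Set.EqOn φ ψ' d}) →
        (fun s : ℕ → A => φ (fun i : ℕ => if h : i < n then ψ ⟨i, h⟩ s else s i)) ∈
          {φ : (ℕ → A) → A | ∀ d ∈ X, ∃ ψ' ∈ C, Set.EqOn φ ψ' d}) := by
  constructor
  · intro n d hd
    exact ⟨_, hproj n, fun s _ => rfl⟩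
  · intro n φ hφ ψ hψ d hd
    -- choose χ i ∈ C agreeing with ψ i on d
    choose χ hχC hχeq using fun i : Fin n => hψ i d hd
    -- the substituted set
    have hdψ := hsub d hd n ψ
    obtain ⟨φ', hφ'C, hφ'eq⟩ := hφ _ hdψ
    refine ⟨fun s => φ' (fun i : ℕ => if h : i < n then χ ⟨i, h⟩ s else s i),
      hq n φ' hφ'C χ hχC, ?_⟩
    intro s hs
    have ht : (fun i : ℕ => if h : i < n then ψ ⟨i, h⟩ s else s i) ∈
        {t : ℕ → A | ∃ s ∈ d, t = fun i : ℕ => if h : i < n then ψ ⟨i, h⟩ s else s i} :=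
      ⟨s, hs, rfl⟩
    have h1 := hφ'eq ht
    have h2 : (fun i : ℕ => if h : i < n then ψ ⟨i, h⟩ s else s i)
        = fun i : ℕ => if h : i < n then χ ⟨i, h⟩ s else s i := by
      funext i
      by_cases h : i < n
      · simp [h, hχeq ⟨i, h⟩ hs]
      · simp [h]
    simpa [h2] using h1
end

section
/- Let X be an infinitely substitutive ideal on A^ω and C an infinitary ω-clone on A. Then Cl_X(C) is an infinitary ω-clone. -/
/-- If X is an infinitely substitutive ideal on A^ω and C is an infinitary ω-clone,
then Cl_X(C) is an infinitary ω-clone. -/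
theorem stmt_12 {A : Type*} (X : Set (Set (ℕ → A)))
    (hdown : ∀ d ∈ X, ∀ c : Set (ℕ → A), c ⊆ d → c ∈ X)
    (hunion : ∀ d₁ ∈ X, ∀ d₂ ∈ X, d₁ ∪ d₂ ∈ X)
    (hsub : ∀ d ∈ X, ∀ φ : ℕ → ((ℕ → A) → A),
      {t : ℕ → A | ∃ s ∈ d, t = fun i : ℕ => φ i s} ∈ X)
    (C : Set ((ℕ → A) → A))
    (hproj : ∀ n : ℕ, (fun s : ℕ → A => s n) ∈ C)
    (hq : ∀ φ : (ℕ → A) → A, φ ∈ C → ∀ ψ : ℕ → ((ℕ → A) → A),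
      (∀ i, ψ i ∈ C) → (fun s : ℕ → A => φ (fun i : ℕ => ψ i s)) ∈ C) :
    (∀ n : ℕ, (fun s : ℕ → A => s n) ∈
        {φ : (ℕ → A) → A | ∀ d ∈ X, ∃ ψ ∈ C, Set.EqOn φ ψ d}) ∧
    (∀ φ : (ℕ → A) → A,
      φ ∈ {φ : (ℕ → A) → A | ∀ d ∈ X, ∃ ψ ∈ C, Set.EqOn φ ψ d} →
      ∀ ψ : ℕ → ((ℕ → A) → A),
        (∀ i, ψ i ∈ {φ : (ℕ → A) → A | ∀ d ∈ X, ∃ ψ' ∈ C, Set.EqOn φ ψ' d}) →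
        (fun s : ℕ → A => φ (fun i : ℕ => ψ i s)) ∈
          {φ : (ℕ → A) → A | ∀ d ∈ X, ∃ ψ' ∈ C, Set.EqOn φ ψ' d}) := by
  constructor
  · intro n d hd
    exact ⟨_, hproj n, fun s _ => rfl⟩
  · intro φ hφ ψ hψ d hd
    choose ψ' hψ'C hψ'eq using fun i => hψ i d hd
    have hd' := hsub d hd ψ'
    obtain ⟨χ, hχC, hχeq⟩ := hφ _ hd'
    refine ⟨fun s => χ (fun i => ψ' i s), hq χ hχC ψ' hψ'C, ?_⟩
    intro s hs
    have h1 : (fun i => ψ i s) = fun i => ψ' i s := funext fun i => hψ'eq i hs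
    have h2 : (fun i => ψ' i s) ∈ {t : ℕ → A | ∃ u ∈ d, t = fun i : ℕ => ψ' i u} :=
      ⟨s, hs, rfl⟩
    simp only [h1]
    exact hχeq h2
end

section
/- Let R ⊆ A^ω and let R̄ denote its closure in the product topology on A^ω (A discrete). Then Pol^ω(R̄) = Pol^ω_⊥(R), i.e. an ω-operation φ satisfies: (for every ω×ω matrix m with all columns in R̄, φ[m] ∈ R̄) if and only if (for every ω×ω matrix m with all columns in R, φ[m] ∈ R̄). -/
/-- Pol^ω(R̄) = Pol^ω_⊥(R): preserving the local closure R̄ on matrices with columns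
in R̄ is equivalent to landing in R̄ on matrices with columns in R. -/
theorem stmt_14 {A : Type*} (R : Set (ℕ → A)) (φ : (ℕ → A) → A) :
    (∀ m : ℕ → (ℕ → A),
      (∀ j : ℕ, (fun i : ℕ => m i j) ∈
        {s : ℕ → A | ∀ d : Set ℕ, d.Finite → ∃ r ∈ R, Set.EqOn s r d}) →
      (fun i : ℕ => φ (m i)) ∈
        {s : ℕ → A | ∀ d : Set ℕ, d.Finite → ∃ r ∈ R, Set.EqOn s r d}) ↔
    (∀ m : ℕ → (ℕ → A),
      (∀ j : ℕ, (fun i : ℕ => m i j) ∈ R) →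
      (fun i : ℕ => φ (m i)) ∈
        {s : ℕ → A | ∀ d : Set ℕ, d.Finite → ∃ r ∈ R, Set.EqOn s r d}) := by
  constructor
  · intro H m hm
    exact H m fun j d hd => ⟨fun i => m i j, hm j, fun i _ => rfl⟩
  · intro H m hm d hd
    choose r hr hre using fun j => hm j d hd
    obtain ⟨s, hs, hse⟩ := H (fun i j => r j i) (fun j => hr j) d hd
    refine ⟨s, hs, fun i hi => ?_⟩
    have hrow : m i = fun j => r j i := funext fun j => hre j hi
    have := hse hi
    simpa [hrow] using this
end

section
/- Let A = 2 = {0,1} and R = {0^n 1^ω : n ≥ 0} ⊆ 2^ω (sequences of finitely many 0s followed by all 1s). Then the constant-zero ω-operation c_0 belongs to Pol^ω(R̄) but every φ ∈ Pol^ω_G(R) satisfies φ(1^ω) = 1; hence the local closure of Pol^ω_G(R) is strictly contained in Pol^ω(R̄). -/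
def zerosThenOnes : Set (ℕ → Bool) := {s | ∃ n : ℕ, ∀ i, s i = decide (n ≤ i)}

/-- The closure of `R` in the product topology on `2^ω`, described by agreement on finite sets. -/
def finiteApproximations (R : Set (ℕ → Bool)) : Set (ℕ → Bool) :=
  {s | ∀ d : Set ℕ, d.Finite → ∃ r ∈ R, Set.EqOn s r d}

lemma const_true_mem_zerosThenOnes : (fun _ => true) ∈ zerosThenOnes :=
  ⟨0, fun i => by simp⟩

lemma eq_true_of_const_mem_zerosThenOnes {b : Bool} (h : (fun _ => b) ∈ zerosThenOnes) :
    b = true := by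
  obtain ⟨n, hn⟩ := h
  simpa using hn n

lemma const_false_mem_finiteApproximations_zerosThenOnes :
    (fun _ => false) ∈ finiteApproximations zerosThenOnes := by
  intro d hd
  obtain ⟨N, hN⟩ := hd.bddAbove
  refine ⟨fun i => decide (N < i), ⟨N + 1, fun i => rfl⟩, fun i hi => ?_⟩
  simp [Nat.not_lt.mpr (hN hi)]

/-- For R = {0^n 1^ω : n ≥ 0} ⊆ 2^ω: the constant-zero ω-operation belongs to
Pol^ω(R̄), while every φ ∈ Pol^ω_G(R) satisfies φ(1^ω) = 1. -/
theorem stmt_15 :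
    ((∀ m : ℕ → (ℕ → Bool),
        (∀ j : ℕ, (fun i : ℕ => m i j) ∈
          {s : ℕ → Bool | ∀ d : Set ℕ, d.Finite →
            ∃ r ∈ {s : ℕ → Bool | ∃ n : ℕ, ∀ i, s i = decide (n ≤ i)}, Set.EqOn s r d}) →
        (fun _ : ℕ => (false : Bool)) ∈
          {s : ℕ → Bool | ∀ d : Set ℕ, d.Finite →
            ∃ r ∈ {s : ℕ → Bool | ∃ n : ℕ, ∀ i, s i = decide (n ≤ i)}, Set.EqOn s r d}) ∧
     (∀ φ : (ℕ → Bool) → Bool,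
        (∀ m : ℕ → (ℕ → Bool),
          (∀ j : ℕ, (fun i : ℕ => m i j) ∈ {s : ℕ → Bool | ∃ n : ℕ, ∀ i, s i = decide (n ≤ i)}) →
          (fun i : ℕ => φ (m i)) ∈ {s : ℕ → Bool | ∃ n : ℕ, ∀ i, s i = decide (n ≤ i)}) →
        φ (fun _ => true) = true)) := by
  refine ⟨fun _ _ => const_false_mem_finiteApproximations_zerosThenOnes, fun φ hφ => ?_⟩
  -- The all-ones matrix has every column in `R`, so `φ` maps it to the constant `φ 1^ω`.
  exact eq_true_of_const_mem_zerosThenOnes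
    (hφ (fun _ _ => true) fun _ => const_true_mem_zerosThenOnes)
end

section
/- Let A be a finite set and R ⊆ A^ω closed in the product topology. Then for every finite b ⊆ ω, the relation ∃_b R = {u ∈ A^ω : ∃ r ∈ R, u_i = r_i for all i ∉ b} is closed in the product topology; in fact ∃_b R = ⋂ {∃_Γ R : b ⊆ Γ ⊆ ω, Γ cofinite}. -/
/-- ∃_Γ R is closed when Γ is cofinite. -/
lemma exists_cofinite_closed {A : Type*} [Finite A] [TopologicalSpace A] [DiscreteTopology A]
    (R : Set (ℕ → A)) (Γ : Set ℕ) (hΓ : Γᶜ.Finite) :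
    IsClosed {u : ℕ → A | ∃ r ∈ R, ∀ i ∉ Γ, u i = r i} := by
  haveI : Finite ↥(Γᶜ) := hΓ.to_subtype
  set f : (ℕ → A) → (↥(Γᶜ) → A) := fun u i => u i with hf
  have hcont : Continuous f := by continuity
  have heq : {u : ℕ → A | ∃ r ∈ R, ∀ i ∉ Γ, u i = r i} = f ⁻¹' (f '' R) := by
    ext u
    simp only [Set.mem_setOf_eq, Set.mem_preimage, Set.mem_image]
    constructor
    · rintro ⟨r, hr, h⟩
      exact ⟨r, hr, by funext i; exact (h i i.2).symm⟩
    · rintro ⟨r, hr, h⟩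
      refine ⟨r, hr, fun i hi => ?_⟩
      exact (congrFun h ⟨i, hi⟩).symm
  rw [heq]
  exact (isClosed_discrete _).preimage hcont

/-- For finite A and closed R ⊆ A^ω, ∃_b R is closed for every finite b ⊆ ω; in fact
∃_b R is the intersection of the ∃_Γ R over the cofinite Γ ⊇ b. -/
theorem stmt_17 {A : Type*} [Finite A] [TopologicalSpace A] [DiscreteTopology A]
    (R : Set (ℕ → A)) (hR : IsClosed R) (b : Set ℕ) (hb : b.Finite) :
    IsClosed {u : ℕ → A | ∃ r ∈ R, ∀ i ∉ b, u i = r i} ∧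
    {u : ℕ → A | ∃ r ∈ R, ∀ i ∉ b, u i = r i} =
      ⋂ Γ ∈ {Γ : Set ℕ | b ⊆ Γ ∧ Γᶜ.Finite},
        {u : ℕ → A | ∃ r ∈ R, ∀ i ∉ Γ, u i = r i} := by
  have key : {u : ℕ → A | ∃ r ∈ R, ∀ i ∉ b, u i = r i} =
      ⋂ Γ ∈ {Γ : Set ℕ | b ⊆ Γ ∧ Γᶜ.Finite},
        {u : ℕ → A | ∃ r ∈ R, ∀ i ∉ Γ, u i = r i} := by
    ext u
    simp only [Set.mem_iInter, Set.mem_setOf_eq]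
    constructor
    · rintro ⟨r, hr, h⟩ Γ ⟨hbΓ, _⟩
      exact ⟨r, hr, fun i hi => h i (fun hib => hi (hbΓ hib))⟩
    · intro h
      -- define closed nonempty nested sets
      set S : ℕ → Set (ℕ → A) := fun n =>
        {r ∈ R | ∀ i < n, i ∉ b → u i = r i} with hS
      have hSclosed : ∀ n, IsClosed (S n) := by
        intro n
        have : S n = R ∩ ⋂ i ∈ {i | i < n ∧ i ∉ b}, {r : ℕ → A | u i = r i} := by
          ext r
          simp only [hS, Set.mem_inter_iff, Set.mem_setOf_eq, Set.mem_iInter]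
          tauto
        rw [this]
        refine hR.inter (isClosed_biInter fun i _ => ?_)
        exact isClosed_eq continuous_const (continuous_apply i)
      have hSne : ∀ n, (S n).Nonempty := by
        intro n
        have hΓ : b ⊆ b ∪ {i | n ≤ i} ∧ (b ∪ {i | n ≤ i})ᶜ.Finite := by
          refine ⟨Set.subset_union_left, ?_⟩
          refine Set.Finite.subset (Set.finite_Iio n) fun i hi => ?_
          simp only [Set.mem_compl_iff, Set.mem_union, Set.mem_setOf_eq, not_or, not_le] at hi
          exact hi.2
        obtain ⟨r, hr, hru⟩ := h _ hΓ
        refine ⟨r, hr, fun i hin hib => ?_⟩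
        exact hru i (by simp [hib, Nat.not_le.mpr hin])
      have hSsub : ∀ n, S (n + 1) ⊆ S n := fun n r hr =>
        ⟨hr.1, fun i hi hib => hr.2 i (Nat.lt_succ_of_lt hi) hib⟩
      have hScompact : IsCompact (S 0) := (hSclosed 0).isCompact
      obtain ⟨r, hrmem⟩ := IsCompact.nonempty_iInter_of_sequence_nonempty_isCompact_isClosed
        S hSsub hSne hScompact hSclosed
      simp only [Set.mem_iInter] at hrmem
      exact ⟨r, (hrmem 0).1, fun i hib => (hrmem (i + 1)).2 i (Nat.lt_succ_self i) hib⟩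
  constructor
  · rw [key]
    exact isClosed_biInter fun Γ hΓ => exists_cofinite_closed R Γ hΓ.2
  · exact key
end
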